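/- arXiv:math/0512244 — 3 statements merged into one kernel-verified Lean document; each statement's English description precedes it below -/
import Mathlib

section
/- Let (Q,+) be an NK-loop and let f, g be special endomorphisms of (Q,+). Then the composition f∘g is a special endomorphism of (Q,+). -/
/- Preamble: NK-loops, written additively.
   A loop is a set with `+`, a neutral element `0`, and unique left/right
   solvability.  An NK-loop is a loop in which every element decomposes as
   `x = u + v = v + u` with `u` in the nucleus and `v` in the Moufang center.
   Every NK-loop is a diassociative Moufang loop, so every element has a
   (uniquely determined) two-sided inverse `-x`, which we include in the
   structure. -/

universe u

section Preamble
variable {Q : Type u}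

/-- `a` belongs to the nucleus `N(Q,+)`. -/
def inNucleus [Add Q] (a : Q) : Prop :=
  ∀ x y : Q, (a + x) + y = a + (x + y) ∧ (x + a) + y = x + (a + y) ∧
    (x + y) + a = x + (y + a)

/-- `a` belongs to the Moufang center `K(Q,+)`. -/
def inMoufangCenter [Add Q] (a : Q) : Prop :=
  ∀ x y : Q, (a + a) + (x + y) = (a + x) + (a + y)

/-- `a` belongs to the center `Z(Q,+) = N(Q,+) ∩ K(Q,+)`. -/
def inCenter [Add Q] (a : Q) : Prop := inNucleus a ∧ inMoufangCenter a

/-- An NK-loop `(Q,+)`: a loop in which every element decomposes as a sum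
    `x = u + v = v + u` with `u ∈ N(Q,+)` and `v ∈ K(Q,+)`. -/
class NKLoop (Q : Type u) extends Add Q, Zero Q, Neg Q where
  zero_add : ∀ x : Q, 0 + x = x
  add_zero : ∀ x : Q, x + 0 = x
  exu_left : ∀ a b : Q, ∃! x : Q, a + x = b
  exu_right : ∀ a b : Q, ∃! y : Q, y + a = b
  neg_add_cancel : ∀ x : Q, -x + x = 0
  add_neg_cancel : ∀ x : Q, x + -x = 0
  nk_decomp : ∀ x : Q, ∃ u v : Q, inNucleus u ∧ inMoufangCenter v ∧
      x = u + v ∧ x = v + u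

variable [Add Q] [Zero Q] [Neg Q]

/-- Natural multiple `n • x`. -/
def nsmulL : ℕ → Q → Q
  | 0, _ => 0
  | n + 1, x => x + nsmulL n x

/-- Integer multiple `m • x` (unambiguous by diassociativity). -/
def zsmulL : ℤ → Q → Q
  | Int.ofNat n, x => nsmulL n x
  | Int.negSucc n, x => -(nsmulL (n + 1) x)

/-- `f` is an endomorphism of `(Q,+)`. -/
def IsEndo (f : Q → Q) : Prop := ∀ x y : Q, f (x + y) = f x + f y

/-- `a` belongs to the center of the (commutative) subloop `(K(Q,+),+)`:
    `a ∈ K(Q,+)` and `a` satisfies the nucleus conditions relative to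
    elements of `K(Q,+)`. -/
def inCenterOfK (a : Q) : Prop :=
  inMoufangCenter a ∧ ∀ x y : Q, inMoufangCenter x → inMoufangCenter y →
    (a + x) + y = a + (x + y) ∧ (x + a) + y = x + (a + y) ∧
      (x + y) + a = x + (y + a)

/-- `f` is a special endomorphism of the NK-loop `(Q,+)`:
    `f(Q) ⊆ K(Q,+)`, the restriction of `f` to `K(Q,+)` is a quasicentral
    endomorphism of the (commutative) loop `(K(Q,+),+)`, and
    `f(N(Q,+)) ⊆ N(Q,+)`. -/
def IsSpecial (f : Q → Q) : Prop :=
  IsEndo f ∧ (∀ x : Q, inMoufangCenter (f x)) ∧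
  (∃ m : ℤ, ∀ x : Q, inMoufangCenter x → inCenterOfK (zsmulL m x + f x)) ∧
  (∀ x : Q, inNucleus x → inNucleus (f x))

/-- `f` satisfies condition (F): `-x + f(x) ∈ K(Q,+)` and
    `x + f(x) ∈ N(Q,+)` for all `x`. -/
def SatisfiesF (f : Q → Q) : Prop :=
  ∀ x : Q, inMoufangCenter (-x + f x) ∧ inNucleus (x + f x)

end Preamble

/- ===== Auxiliary development for the proof ===== -/

/-- Iterated left translation by `a`. -/
def nkLpow {Q : Type u} [Add Q] (a : Q) : ℕ → Q → Q
  | 0, w => w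
  | k + 1, w => a + nkLpow a k w

namespace NKAux

variable {Q : Type u} [NKLoop Q]

theorem lzero_add (x : Q) : 0 + x = x := NKLoop.zero_add x
theorem ladd_zero (x : Q) : x + 0 = x := NKLoop.add_zero x

theorem add_left_cancel' {a x y : Q} (h : a + x = a + y) : x = y := by
  obtain ⟨w, -, hu⟩ := NKLoop.exu_left a (a + y)
  exact (hu x h).trans (hu y rfl).symm

theorem eq_neg_of_add_eq_zero' {a b : Q} (h : a + b = 0) : b = -a := by
  obtain ⟨w, -, hu⟩ := NKLoop.exu_left a 0
  exact (hu b h).trans (hu (-a) (NKLoop.add_neg_cancel a)).symm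

theorem neg_neg' (a : Q) : -(-a) = a :=
  (eq_neg_of_add_eq_zero' (NKLoop.neg_add_cancel a)).symm

theorem neg_zero' : -(0 : Q) = 0 :=
  (eq_neg_of_add_eq_zero' (lzero_add (0 : Q))).symm

/- ===== Moufang-center elements ===== -/

theorem mc_sq_left {a : Q} (ha : inMoufangCenter a) (y : Q) :
    (a + a) + y = a + (a + y) := by
  have h := ha 0 y
  rwa [lzero_add, ladd_zero] at h

theorem mc_sq_right {a : Q} (ha : inMoufangCenter a) (y : Q) :
    (a + a) + y = (a + y) + a := by
  have h := ha y 0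
  rwa [ladd_zero, ladd_zero] at h

theorem mc_comm {a : Q} (ha : inMoufangCenter a) (w : Q) : a + w = w + a := by
  obtain ⟨t, ht, -⟩ := NKLoop.exu_left a w
  calc a + w = a + (a + t) := by rw [ht]
    _ = (a + a) + t := (mc_sq_left ha t).symm
    _ = (a + t) + a := mc_sq_right ha t
    _ = w + a := by rw [ht]

theorem mc_cancel₁ {a : Q} (ha : inMoufangCenter a) (w : Q) :
    a + (-a + w) = w := by
  apply add_left_cancel' (a := a)
  calc a + (a + (-a + w)) = (a + a) + (-a + w) := (mc_sq_left ha _).symm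
    _ = (a + -a) + (a + w) := ha (-a) w
    _ = 0 + (a + w) := by rw [NKLoop.add_neg_cancel]
    _ = a + w := lzero_add _

theorem mc_cancel₂ {a : Q} (ha : inMoufangCenter a) (w : Q) :
    -a + (a + w) = w := by
  apply add_left_cancel' (a := a)
  rw [mc_cancel₁ ha (a + w)]

theorem mc_neg {a : Q} (ha : inMoufangCenter a) : inMoufangCenter (-a) := by
  intro x y
  apply add_left_cancel' (a := a + a)
  have h1 : (a + a) + ((-a + -a) + (x + y)) = x + y := by
    rw [ha (-a + -a) (x + y), mc_cancel₁ ha (-a), mc_cancel₂ ha (x + y)]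
  have h2 : (a + a) + ((-a + x) + (-a + y)) = x + y := by
    rw [ha (-a + x) (-a + y), mc_cancel₁ ha x, mc_cancel₁ ha y]
  rw [h1, h2]

theorem lpow_succ_inner {a : Q} (k : ℕ) (w : Q) :
    nkLpow a (k + 1) w = nkLpow a k (a + w) := by
  induction k with
  | zero => rfl
  | succ k ih =>
    show a + nkLpow a (k + 1) w = a + nkLpow a k (a + w)
    rw [ih]

theorem mc_add_lpow_neg {a : Q} (ha : inMoufangCenter a) (k : ℕ) (w : Q) :
    a + nkLpow a k (-a + w) = nkLpow a k w := by
  induction k with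
  | zero => exact mc_cancel₁ ha w
  | succ k ih =>
    show a + (a + nkLpow a k (-a + w)) = a + nkLpow a k w
    rw [ih]

theorem mc_nsmul_add {a : Q} (ha : inMoufangCenter a) (k : ℕ) (w : Q) :
    nsmulL k a + w = nkLpow a k w := by
  induction k generalizing w with
  | zero => exact lzero_add w
  | succ k ih =>
    calc nsmulL (k + 1) a + w = (a + nsmulL k a) + w := rfl
      _ = (a + nsmulL k a) + (a + (-a + w)) := by
          rw [mc_cancel₁ ha w]
      _ = (a + a) + (nsmulL k a + (-a + w)) := (ha (nsmulL k a) (-a + w)).symm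
      _ = a + (a + (nsmulL k a + (-a + w))) := mc_sq_left ha _
      _ = a + (a + nkLpow a k (-a + w)) := by rw [ih (-a + w)]
      _ = a + nkLpow a k w := by rw [mc_add_lpow_neg ha k w]
      _ = nkLpow a (k + 1) w := rfl

theorem lpow_nsmul {a : Q} (j k : ℕ) :
    nkLpow a j (nsmulL k a) = nsmulL (j + k) a := by
  induction j with
  | zero => rw [Nat.zero_add]; rfl
  | succ j ih =>
    show a + nkLpow a j (nsmulL k a) = nsmulL (j + 1 + k) a
    rw [ih, show j + 1 + k = (j + k) + 1 by omega]
    rfl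

theorem mc_nsmul_add_nsmul {a : Q} (ha : inMoufangCenter a) (j k : ℕ) :
    nsmulL j a + nsmulL k a = nsmulL (j + k) a := by
  rw [mc_nsmul_add ha j (nsmulL k a), lpow_nsmul]

theorem mc_lpow_add_lpow {a : Q} (ha : inMoufangCenter a) (k : ℕ) (P R : Q) :
    nkLpow a k P + nkLpow a k R = nkLpow a (k + k) (P + R) := by
  induction k with
  | zero => rfl
  | succ k ih =>
    calc nkLpow a (k + 1) P + nkLpow a (k + 1) R
        = (a + a) + (nkLpow a k P + nkLpow a k R) :=
          (ha (nkLpow a k P) (nkLpow a k R)).symm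
      _ = (a + a) + nkLpow a (k + k) (P + R) := by rw [ih]
      _ = a + (a + nkLpow a (k + k) (P + R)) := mc_sq_left ha _
      _ = nkLpow a ((k + k) + 2) (P + R) := rfl
      _ = nkLpow a ((k + 1) + (k + 1)) (P + R) := by
          rw [show (k + k) + 2 = (k + 1) + (k + 1) by omega]

theorem mc_nsmul_mem {a : Q} (ha : inMoufangCenter a) (n : ℕ) :
    inMoufangCenter (nsmulL n a) := by
  intro P R
  rw [mc_nsmul_add_nsmul ha n n, mc_nsmul_add ha (n + n) (P + R),
    mc_nsmul_add ha n P, mc_nsmul_add ha n R]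
  exact (mc_lpow_add_lpow ha n P R).symm

theorem mc_nsmul_neg {a : Q} (ha : inMoufangCenter a) (n : ℕ) :
    nsmulL n (-a) = -(nsmulL n a) := by
  have key : ∀ n : ℕ, nsmulL n a + nsmulL n (-a) = 0 := by
    intro n
    induction n with
    | zero => exact lzero_add 0
    | succ k ih =>
      calc nsmulL (k + 1) a + nsmulL (k + 1) (-a)
          = nkLpow a (k + 1) (nsmulL (k + 1) (-a)) := mc_nsmul_add ha (k + 1) _
        _ = nkLpow a k (a + nsmulL (k + 1) (-a)) := lpow_succ_inner k _
        _ = nkLpow a k (nsmulL k (-a)) := by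
            rw [show a + nsmulL (k + 1) (-a) = nsmulL k (-a) from
              mc_cancel₁ ha (nsmulL k (-a))]
        _ = nsmulL k a + nsmulL k (-a) := (mc_nsmul_add ha k _).symm
        _ = 0 := ih
  exact eq_neg_of_add_eq_zero' (key n)

theorem zsmul_neg_int (j : ℤ) (b : Q) : zsmulL (-j) b = -(zsmulL j b) := by
  match j with
  | Int.ofNat 0 =>
    show zsmulL (0 : ℤ) b = -(zsmulL (Int.ofNat 0) b)
    rw [show -(zsmulL (Int.ofNat 0) b) = -(0 : Q) from rfl, neg_zero']
    rfl
  | Int.ofNat (n + 1) =>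
    show zsmulL (Int.negSucc n) b = -(zsmulL (Int.ofNat (n + 1)) b)
    rfl
  | Int.negSucc n =>
    show zsmulL (Int.ofNat (n + 1)) b = -(zsmulL (Int.negSucc n) b)
    show nsmulL (n + 1) b = -(-(nsmulL (n + 1) b))
    rw [neg_neg']

theorem mc_zsmul_neg_arg {a : Q} (ha : inMoufangCenter a) (j : ℤ) :
    zsmulL j (-a) = -(zsmulL j a) := by
  match j with
  | Int.ofNat n => exact mc_nsmul_neg ha n
  | Int.negSucc n =>
    show -(nsmulL (n + 1) (-a)) = -(-(nsmulL (n + 1) a))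
    rw [mc_nsmul_neg ha]

theorem mc_zsmul_mem {a : Q} (ha : inMoufangCenter a) (j : ℤ) :
    inMoufangCenter (zsmulL j a) := by
  match j with
  | Int.ofNat n => exact mc_nsmul_mem ha n
  | Int.negSucc n => exact mc_neg (mc_nsmul_mem ha (n + 1))

theorem mc_nsmul_nsmul {a : Q} (ha : inMoufangCenter a) (j k : ℕ) :
    nsmulL j (nsmulL k a) = nsmulL (j * k) a := by
  induction j with
  | zero => rw [Nat.zero_mul]; rfl
  | succ j ih =>
    show nsmulL k a + nsmulL j (nsmulL k a) = nsmulL ((j + 1) * k) a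
    rw [ih, mc_nsmul_add_nsmul ha k (j * k), show (j + 1) * k = k + j * k by ring]

theorem mc_zsmul_nsmul {a : Q} (ha : inMoufangCenter a) (j : ℤ) (k : ℕ) :
    zsmulL j (nsmulL k a) = zsmulL (j * (k : ℤ)) a := by
  match j with
  | Int.ofNat i =>
    have hc : (Int.ofNat i) * (k : ℤ) = Int.ofNat (i * k) := by
      simp [Int.ofNat_eq_coe]
    rw [hc]
    show nsmulL i (nsmulL k a) = nsmulL (i * k) a
    exact mc_nsmul_nsmul ha i k
  | Int.negSucc i =>
    have hc : (Int.negSucc i) * (k : ℤ) = -(((i + 1) * k : ℕ) : ℤ) := by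
      rw [Int.negSucc_eq]; push_cast; ring
    rw [hc, zsmul_neg_int]
    show -(nsmulL (i + 1) (nsmulL k a)) = -(zsmulL (((i + 1) * k : ℕ) : ℤ) a)
    rw [mc_nsmul_nsmul ha (i + 1) k]
    rfl

theorem mc_zsmul_zsmul {a : Q} (ha : inMoufangCenter a) (m n : ℤ) :
    zsmulL m (zsmulL n a) = zsmulL (m * n) a := by
  match n with
  | Int.ofNat k =>
    show zsmulL m (nsmulL k a) = zsmulL (m * Int.ofNat k) a
    rw [mc_zsmul_nsmul ha m k]
    rfl
  | Int.negSucc k =>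
    have hw : inMoufangCenter (nsmulL (k + 1) a) := mc_nsmul_mem ha (k + 1)
    have hc : m * (Int.negSucc k) = -(m * (((k + 1) : ℕ) : ℤ)) := by
      rw [Int.negSucc_eq]; push_cast; ring
    calc zsmulL m (zsmulL (Int.negSucc k) a)
        = zsmulL m (-(nsmulL (k + 1) a)) := rfl
      _ = -(zsmulL m (nsmulL (k + 1) a)) := mc_zsmul_neg_arg hw m
      _ = -(zsmulL (m * (((k + 1) : ℕ) : ℤ)) a) := by rw [mc_zsmul_nsmul ha m (k + 1)]
      _ = zsmulL (-(m * (((k + 1) : ℕ) : ℤ))) a := (zsmul_neg_int _ a).symm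
      _ = zsmulL (m * Int.negSucc k) a := by rw [hc]

/- ===== Nucleus lemmas ===== -/

theorem nuc_add {u u' : Q} (hu : inNucleus u) (hu' : inNucleus u') :
    inNucleus (u + u') := by
  intro x y
  refine ⟨?_, ?_, ?_⟩
  · calc ((u + u') + x) + y = (u + (u' + x)) + y := by rw [(hu u' x).1]
      _ = u + ((u' + x) + y) := (hu (u' + x) y).1
      _ = u + (u' + (x + y)) := by rw [(hu' x y).1]
      _ = (u + u') + (x + y) := ((hu u' (x + y)).1).symm
  · calc (x + (u + u')) + y = ((x + u) + u') + y := by rw [(hu x u').2.1]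
      _ = (x + u) + (u' + y) := (hu' (x + u) y).2.1
      _ = x + (u + (u' + y)) := (hu x (u' + y)).2.1
      _ = x + ((u + u') + y) := by rw [(hu u' y).1]
  · calc (x + y) + (u + u') = ((x + y) + u) + u' := ((hu (x + y) u').2.1).symm
      _ = (x + (y + u)) + u' := by rw [(hu x y).2.2]
      _ = x + ((y + u) + u') := (hu' x (y + u)).2.2
      _ = x + (y + (u + u')) := by rw [(hu y u').2.1]

theorem nuc_neg {u : Q} (hu : inNucleus u) : inNucleus (-u) := by
  intro x y
  refine ⟨?_, ?_, ?_⟩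
  · -- (-u + x) + y = -u + (x + y)
    apply add_left_cancel' (a := u)
    calc u + ((-u + x) + y) = (u + (-u + x)) + y := ((hu (-u + x) y).1).symm
      _ = ((u + -u) + x) + y := by rw [(hu (-u) x).1]
      _ = (0 + x) + y := by rw [NKLoop.add_neg_cancel]
      _ = x + y := by rw [lzero_add]
      _ = 0 + (x + y) := (lzero_add _).symm
      _ = (u + -u) + (x + y) := by rw [NKLoop.add_neg_cancel]
      _ = u + (-u + (x + y)) := (hu (-u) (x + y)).1
  · -- (x + -u) + y = x + (-u + y)
    have h1 : (x + -u) + u = x := by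
      rw [(hu x (-u)).2.2, NKLoop.neg_add_cancel, ladd_zero]
    calc (x + -u) + y
        = (x + -u) + ((u + -u) + y) := by rw [NKLoop.add_neg_cancel, lzero_add]
      _ = (x + -u) + (u + (-u + y)) := by rw [(hu (-u) y).1]
      _ = ((x + -u) + u) + (-u + y) := ((hu (x + -u) (-u + y)).2.1).symm
      _ = x + (-u + y) := by rw [h1]
  · -- (x + y) + -u = x + (y + -u)
    have h1 : (y + -u) + u = y := by
      rw [(hu y (-u)).2.2, NKLoop.neg_add_cancel, ladd_zero]
    calc (x + y) + -u
        = (x + ((y + -u) + u)) + -u := by rw [h1]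
      _ = ((x + (y + -u)) + u) + -u := by rw [(hu x (y + -u)).2.2]
      _ = (x + (y + -u)) + (u + -u) := (hu (x + (y + -u)) (-u)).2.1
      _ = (x + (y + -u)) + 0 := by rw [NKLoop.add_neg_cancel]
      _ = x + (y + -u) := ladd_zero _

theorem nuc_comm_add {s t : Q} (hs : inNucleus s) (ht : inNucleus t)
    (hcs : ∀ w : Q, s + w = w + s) (hct : ∀ w : Q, t + w = w + t) (w : Q) :
    (s + t) + w = w + (s + t) := by
  calc (s + t) + w = s + (t + w) := (hs t w).1
    _ = s + (w + t) := by rw [hct w]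
    _ = (s + w) + t := ((hs w t).1).symm
    _ = (w + s) + t := by rw [hcs w]
    _ = w + (s + t) := (ht w s).2.2

theorem nuc_comm_neg {s : Q} (hs : inNucleus s)
    (hcs : ∀ w : Q, s + w = w + s) (w : Q) : -s + w = w + -s := by
  have h1 : s + (-s + w) = w := by
    calc s + (-s + w) = (s + -s) + w := ((hs (-s) w).1).symm
      _ = 0 + w := by rw [NKLoop.add_neg_cancel]
      _ = w := lzero_add w
  calc -s + w = (-s + w) + 0 := (ladd_zero _).symm
    _ = (-s + w) + (s + -s) := by rw [NKLoop.add_neg_cancel]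
    _ = ((-s + w) + s) + -s := ((hs (-s + w) (-s)).2.1).symm
    _ = (s + (-s + w)) + -s := by rw [← hcs (-s + w)]
    _ = w + -s := by rw [h1]

theorem mc_of_nuc_comm {s : Q} (hs : inNucleus s)
    (hc : ∀ w : Q, s + w = w + s) : inMoufangCenter s := by
  intro x y
  calc (s + s) + (x + y) = s + (s + (x + y)) := (hs s (x + y)).1
    _ = s + ((s + x) + y) := by rw [(hs x y).1]
    _ = (s + (s + x)) + y := ((hs (s + x) y).1).symm
    _ = ((s + x) + s) + y := by rw [hc (s + x)]
    _ = (s + x) + (s + y) := (hs (s + x) y).2.1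

/- ===== Z(K) : centre of the Moufang centre ===== -/

theorem zk_nucleus {z : Q} (hz : inCenterOfK z) : inNucleus z := by
  obtain ⟨hzK, hz2⟩ := hz
  intro x y
  obtain ⟨u, v, hu, hv, hx1, hx2⟩ := NKLoop.nk_decomp x
  obtain ⟨u', v', hu', hv', hy1, hy2⟩ := NKLoop.nk_decomp y
  have hU : inNucleus (u + u') := nuc_add hu hu'
  have hxy : x + y = (v + v') + (u + u') := by
    calc x + y = (v + u) + y := by rw [← hx2]
      _ = v + (u + y) := (hu v y).2.1
      _ = v + (u + (u' + v')) := by rw [hy1]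
      _ = v + ((u + u') + v') := by rw [(hu u' v').1]
      _ = v + (v' + (u + u')) := by rw [← mc_comm hv' (u + u')]
      _ = (v + v') + (u + u') := ((hU v v').2.2).symm
  have key1 : (z + x) + y = (z + (v + v')) + (u + u') := by
    calc (z + x) + y = (z + (v + u)) + y := by rw [← hx2]
      _ = ((z + v) + u) + y := by rw [← (hu z v).2.2]
      _ = (z + v) + (u + y) := (hu (z + v) y).2.1
      _ = (z + v) + (u + (u' + v')) := by rw [hy1]
      _ = (z + v) + ((u + u') + v') := by rw [(hu u' v').1]
      _ = (z + v) + (v' + (u + u')) := by rw [← mc_comm hv' (u + u')]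
      _ = ((z + v) + v') + (u + u') := ((hU (z + v) v').2.2).symm
      _ = (z + (v + v')) + (u + u') := by rw [(hz2 v v' hv hv').1]
  have key2 : x + (z + y) = (z + (v + v')) + (u + u') := by
    calc x + (z + y) = (v + u) + (z + (v' + u')) := by rw [← hx2, ← hy2]
      _ = (v + u) + ((z + v') + u') := by rw [← (hu' z v').2.2]
      _ = v + (u + ((z + v') + u')) := (hu v _).2.1
      _ = v + ((u + (z + v')) + u') := by rw [(hu (z + v') u').1]
      _ = v + (((u + z) + v') + u') := by rw [← (hu z v').1]
      _ = v + (((z + u) + v') + u') := by rw [← mc_comm hzK u]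
      _ = v + ((z + (u + v')) + u') := by rw [(hu z v').2.1]
      _ = v + ((z + (v' + u)) + u') := by rw [← mc_comm hv' u]
      _ = v + (((z + v') + u) + u') := by rw [← (hu z v').2.2]
      _ = (v + ((z + v') + u)) + u' := ((hu' v _).2.2).symm
      _ = ((v + (z + v')) + u) + u' := by rw [← (hu v (z + v')).2.2]
      _ = (v + (z + v')) + (u + u') := (hu (v + (z + v')) u').2.1
      _ = ((v + z) + v') + (u + u') := by rw [← (hz2 v v' hv hv').2.1]
      _ = ((z + v) + v') + (u + u') := by rw [mc_comm hzK v]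
      _ = (z + (v + v')) + (u + u') := by rw [(hz2 v v' hv hv').1]
  have key3 : z + (x + y) = (z + (v + v')) + (u + u') := by
    rw [hxy]
    exact ((hU z (v + v')).2.2).symm
  refine ⟨?_, ?_, ?_⟩
  · rw [key1, key3]
  · calc (x + z) + y = (z + x) + y := by rw [← mc_comm hzK x]
      _ = (z + (v + v')) + (u + u') := key1
      _ = x + (z + y) := key2.symm
  · calc (x + y) + z = z + (x + y) := (mc_comm hzK (x + y)).symm
      _ = (z + (v + v')) + (u + u') := key3
      _ = x + (z + y) := key2.symm
      _ = x + (y + z) := by rw [mc_comm hzK y]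

theorem zk_of_nuc_comm {s : Q} (hs : inNucleus s)
    (hc : ∀ w : Q, s + w = w + s) : inCenterOfK s :=
  ⟨mc_of_nuc_comm hs hc, fun x y _ _ => hs x y⟩

theorem zk_comm {z : Q} (hz : inCenterOfK z) (w : Q) : z + w = w + z :=
  mc_comm hz.1 w

theorem zk_add {z z' : Q} (hz : inCenterOfK z) (hz' : inCenterOfK z') :
    inCenterOfK (z + z') := by
  have hn := zk_nucleus hz
  have hn' := zk_nucleus hz'
  exact zk_of_nuc_comm (nuc_add hn hn')
    (nuc_comm_add hn hn' (zk_comm hz) (zk_comm hz'))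

theorem zk_neg {z : Q} (hz : inCenterOfK z) : inCenterOfK (-z) := by
  have hn := zk_nucleus hz
  exact zk_of_nuc_comm (nuc_neg hn) (nuc_comm_neg hn (zk_comm hz))

theorem zk_zero : inCenterOfK (0 : Q) := by
  refine ⟨?_, ?_⟩
  · intro x y
    rw [lzero_add, lzero_add, lzero_add, lzero_add]
  · intro x y _ _
    refine ⟨?_, ?_, ?_⟩
    · rw [lzero_add, lzero_add]
    · rw [ladd_zero, lzero_add]
    · rw [ladd_zero, ladd_zero]

theorem zk_nsmul {z : Q} (hz : inCenterOfK z) (n : ℕ) :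
    inCenterOfK (nsmulL n z) := by
  induction n with
  | zero => exact zk_zero
  | succ k ih => exact zk_add hz ih

theorem zk_zsmul {z : Q} (hz : inCenterOfK z) (m : ℤ) :
    inCenterOfK (zsmulL m z) := by
  match m with
  | Int.ofNat n => exact zk_nsmul hz n
  | Int.negSucc n => exact zk_neg (zk_nsmul hz (n + 1))

/-- Solving `a + w = z` when `z` is central in `K`. -/
theorem zk_solve {a w : Q} (hz : inCenterOfK (a + w)) : w = -a + (a + w) := by
  have hN := zk_nucleus hz
  apply add_left_cancel' (a := a)
  calc a + w = 0 + (a + w) := (lzero_add _).symm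
    _ = (a + -a) + (a + w) := by rw [NKLoop.add_neg_cancel]
    _ = a + (-a + (a + w)) := (hN a (-a)).2.2

end NKAux


/- STATEMENT 6: Lemma 3.1(1).  The composition of two special endomorphisms
   of an NK-loop is special. -/
theorem special_comp {Q : Type u} [NKLoop Q] (f g : Q → Q)
    (hf : IsSpecial f) (hg : IsSpecial g) : IsSpecial (f ∘ g) := by
  obtain ⟨hfE, hfK, ⟨m, hfq⟩, hfN⟩ := hf
  obtain ⟨hgE, hgK, ⟨n, hgq⟩, hgN⟩ := hg
  refine ⟨?_, ?_, ⟨-(m * n), ?_⟩, ?_⟩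
  · intro x y
    show f (g (x + y)) = f (g x) + f (g y)
    rw [hgE, hfE]
  · intro x
    exact hfK (g x)
  · intro x hx
    show inCenterOfK (zsmulL (-(m * n)) x + f (g x))
    have hA : inMoufangCenter (zsmulL n x) := NKAux.mc_zsmul_mem hx n
    have hnA : inMoufangCenter (-(zsmulL n x)) := NKAux.mc_neg hA
    have hz1 : inCenterOfK (zsmulL n x + g x) := hgq x hx
    have hgx : g x = -(zsmulL n x) + (zsmulL n x + g x) := NKAux.zk_solve hz1
    have hz2 : inCenterOfK (zsmulL m (-(zsmulL n x)) + f (-(zsmulL n x))) :=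
      hfq (-(zsmulL n x)) hnA
    have hz2N : inNucleus (zsmulL m (-(zsmulL n x)) + f (-(zsmulL n x))) :=
      NKAux.zk_nucleus hz2
    have hz3 : inCenterOfK (zsmulL m (zsmulL n x + g x) + f (zsmulL n x + g x)) :=
      hfq (zsmulL n x + g x) hz1.1
    have hfz1Z : inCenterOfK (f (zsmulL n x + g x)) := by
      rw [NKAux.zk_solve hz3]
      exact NKAux.zk_add (NKAux.zk_neg (NKAux.zk_zsmul hz1 m)) hz3
    have hBD : -(zsmulL m (-(zsmulL n x))) = zsmulL (m * n) x := by
      rw [NKAux.mc_zsmul_neg_arg hA m, NKAux.neg_neg', NKAux.mc_zsmul_zsmul hx m n]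
    have hfnA2 : f (-(zsmulL n x)) =
        zsmulL (m * n) x + (zsmulL m (-(zsmulL n x)) + f (-(zsmulL n x))) := by
      rw [← hBD]
      exact NKAux.zk_solve hz2
    have hfgx : f (g x) =
        (zsmulL (m * n) x + (zsmulL m (-(zsmulL n x)) + f (-(zsmulL n x)))) +
          f (zsmulL n x + g x) := by
      calc f (g x) = f (-(zsmulL n x) + (zsmulL n x + g x)) := by
            conv_lhs => rw [hgx]
        _ = f (-(zsmulL n x)) + f (zsmulL n x + g x) := hfE _ _
        _ = (zsmulL (m * n) x + (zsmulL m (-(zsmulL n x)) + f (-(zsmulL n x)))) +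
              f (zsmulL n x + g x) := by
            conv_lhs => rw [hfnA2]
    have hsN : inNucleus ((zsmulL m (-(zsmulL n x)) + f (-(zsmulL n x))) +
        f (zsmulL n x + g x)) :=
      NKAux.nuc_add hz2N (NKAux.zk_nucleus hfz1Z)
    have key : zsmulL (-(m * n)) x + f (g x) =
        (zsmulL m (-(zsmulL n x)) + f (-(zsmulL n x))) + f (zsmulL n x + g x) := by
      rw [hfgx, NKAux.zsmul_neg_int (m * n) x]
      calc -(zsmulL (m * n) x) +
            ((zsmulL (m * n) x + (zsmulL m (-(zsmulL n x)) + f (-(zsmulL n x)))) +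
              f (zsmulL n x + g x))
          = -(zsmulL (m * n) x) +
            (zsmulL (m * n) x + ((zsmulL m (-(zsmulL n x)) + f (-(zsmulL n x))) +
              f (zsmulL n x + g x))) := by
            rw [(hz2N (zsmulL (m * n) x) (f (zsmulL n x + g x))).2.1]
        _ = (-(zsmulL (m * n) x) + zsmulL (m * n) x) +
            ((zsmulL m (-(zsmulL n x)) + f (-(zsmulL n x))) + f (zsmulL n x + g x)) :=
            ((hsN (-(zsmulL (m * n) x)) (zsmulL (m * n) x)).2.2).symm
        _ = 0 + ((zsmulL m (-(zsmulL n x)) + f (-(zsmulL n x))) + f (zsmulL n x + g x)) := by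
            rw [NKLoop.neg_add_cancel]
        _ = (zsmulL m (-(zsmulL n x)) + f (-(zsmulL n x))) + f (zsmulL n x + g x) :=
            NKAux.lzero_add _
    rw [key]
    exact NKAux.zk_add hz2 hfz1Z
  · intro x hx
    exact hfN (g x) (hgN x hx)
end

section
/- Let (Q,+) be an NK-loop and let f, g be special endomorphisms of (Q,+). Then the pointwise sum f + g is a special endomorphism of (Q,+), and f + g = g + f. -/
/- Preamble: NK-loops, written additively.
   A loop is a set with `+`, a neutral element `0`, and unique left/right
   solvability.  An NK-loop is a loop in which every element decomposes as
   `x = u + v = v + u` with `u` in the nucleus and `v` in the Moufang center.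
   Every NK-loop is a diassociative Moufang loop, so every element has a
   (uniquely determined) two-sided inverse `-x`, which we include in the
   structure. -/

universe u

/-! For `a ∈ K(Q,+)` the Moufang-center identity with `x = 0` gives `(a + a) + t = a + (a + t)`,
so left translation by `a` is a permutation `σₐ` (inverse: translation by `-a`) and translation
by `j • a` is `σₐ ^ j`. This yields power-associativity in `K(Q,+)`, closure of `K(Q,+)` under
`+` and `-`, and the medial law `(i•v + j•w) + (k•v + l•w) = (i•v + k•v) + (j•w + l•w)`.

If `f` is special and `m`-quasicentral, then `f v = (-m)•v + z` with `z` in the center of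
`K(Q,+)` for `v ∈ K(Q,+)`, while `f u` lies in the center of `Q` for `u ∈ N(Q,+)`. Central
summands can be pulled out of any sum of four terms, so additivity of `f + g` on `x = u + v`
reduces to the medial law for multiples of `v` and `v'`, and `(m + n)`-quasicentrality of
`f + g` to `(m + n)•x + (-m-n)•x = 0`. -/

namespace NKLoop

variable {Q : Type u} [NKLoop Q]

theorem add_left_cancel {a x y : Q} (h : a + x = a + y) : x = y :=
  (exu_left a (a + y)).unique h rfl

theorem exists_add_eq (a t : Q) : ∃ x : Q, a + x = t := (exu_left a t).exists

theorem zsmulL_zero (a : Q) : zsmulL 0 a = 0 := rfl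

end NKLoop

namespace inMoufangCenter

variable {Q : Type u} [NKLoop Q] {a b c : Q}

theorem add_self_add (ha : inMoufangCenter a) (t : Q) : (a + a) + t = a + (a + t) := by
  simpa only [NKLoop.zero_add, NKLoop.add_zero] using ha 0 t

theorem add_comm (ha : inMoufangCenter a) (x : Q) : a + x = x + a := by
  obtain ⟨x', rfl⟩ := NKLoop.exists_add_eq a x
  have h := (ha x' 0).symm
  rw [NKLoop.add_zero, NKLoop.add_zero] at h
  rw [h, ha.add_self_add]

theorem add_neg_cancel_left (ha : inMoufangCenter a) (t : Q) : a + (-a + t) = t := by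
  have h := (ha (-a) t).symm
  rw [NKLoop.add_neg_cancel, NKLoop.zero_add, ha.add_self_add] at h
  exact (NKLoop.add_left_cancel h).symm

theorem neg_add_cancel_left (ha : inMoufangCenter a) (t : Q) : -a + (a + t) = t :=
  NKLoop.add_left_cancel (ha.add_neg_cancel_left _)

def addLeft (ha : inMoufangCenter a) : Equiv.Perm Q where
  toFun := (a + ·)
  invFun := (-a + ·)
  left_inv := ha.neg_add_cancel_left
  right_inv := ha.add_neg_cancel_left

theorem addLeft_apply (ha : inMoufangCenter a) (t : Q) : ha.addLeft t = a + t := rfl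

theorem nsmulL_add_eq_addLeft_pow (ha : inMoufangCenter a) (n : ℕ) (t : Q) :
    nsmulL n a + t = (ha.addLeft ^ n) t := by
  induction n generalizing t with
  | zero => exact NKLoop.zero_add t
  | succ n ih =>
    obtain ⟨t', rfl⟩ := NKLoop.exists_add_eq a t
    calc (a + nsmulL n a) + (a + t') = a + (a + (ha.addLeft ^ n) t') := by
          rw [← ha, ha.add_self_add, ih]
      _ = (ha.addLeft ^ (n + 1)) (a + t') := by
          rw [← addLeft_apply ha t', ← Equiv.Perm.mul_apply, ← pow_succ, pow_succ',
            pow_succ', Equiv.Perm.mul_apply, Equiv.Perm.mul_apply]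
          rfl

theorem addLeft_pow_add_addLeft_pow (ha : inMoufangCenter a) (k : ℕ) (s t : Q) :
    (ha.addLeft ^ k) s + (ha.addLeft ^ k) t = (ha.addLeft ^ (k + k)) (s + t) := by
  induction k with
  | zero => rfl
  | succ k ih =>
    rw [show k + 1 + (k + 1) = k + k + 1 + 1 by omega]
    simp only [pow_succ', Equiv.Perm.mul_apply, addLeft_apply]
    rw [← ha, ha.add_self_add, ih]

theorem nsmulL_mem (ha : inMoufangCenter a) (k : ℕ) : inMoufangCenter (nsmulL k a) := by
  have hkk : nsmulL k a + nsmulL k a = nsmulL (k + k) a :=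
    calc nsmulL k a + nsmulL k a = (ha.addLeft ^ k) ((ha.addLeft ^ k) 0) := by
          rw [← ha.nsmulL_add_eq_addLeft_pow k 0, NKLoop.add_zero,
            ha.nsmulL_add_eq_addLeft_pow]
      _ = nsmulL (k + k) a := by
          rw [← Equiv.Perm.mul_apply, ← pow_add, ← ha.nsmulL_add_eq_addLeft_pow,
            NKLoop.add_zero]
  intro x y
  rw [hkk, ha.nsmulL_add_eq_addLeft_pow, ha.nsmulL_add_eq_addLeft_pow k x,
    ha.nsmulL_add_eq_addLeft_pow k y, ha.addLeft_pow_add_addLeft_pow]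

theorem add_self_mem (hb : inMoufangCenter b) : inMoufangCenter (b + b) := by
  simpa only [nsmulL, NKLoop.add_zero] using hb.nsmulL_mem 2

theorem neg_mem (hb : inMoufangCenter b) : inMoufangCenter (-b) := by
  have neg_add_neg : -b + -b = -(b + b) :=
    NKLoop.add_left_cancel (a := b + b) <| by
      rw [hb.add_self_add, hb.add_neg_cancel_left, NKLoop.add_neg_cancel,
        NKLoop.add_neg_cancel]
  intro x y
  apply NKLoop.add_left_cancel (a := b + b)
  rw [neg_add_neg, hb.add_self_mem.add_neg_cancel_left, hb, hb.add_neg_cancel_left,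
    hb.add_neg_cancel_left]

theorem add_mem (hb : inMoufangCenter b) (hc : inMoufangCenter c) :
    inMoufangCenter (b + c) := by
  intro x y
  obtain ⟨x', rfl⟩ := NKLoop.exists_add_eq b x
  obtain ⟨y', rfl⟩ := NKLoop.exists_add_eq b y
  rw [← hb c c, ← hb x' y', ← hb c x', ← hb c y', ← hb.add_self_mem, ← hb.add_self_mem, ← hc]

theorem zsmulL_add_eq_addLeft_zpow (ha : inMoufangCenter a) (j : ℤ) (t : Q) :
    zsmulL j a + t = (ha.addLeft ^ j) t := by
  cases j with
  | ofNat n => exact ha.nsmulL_add_eq_addLeft_pow n t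
  | negSucc n =>
    rw [zpow_negSucc, Equiv.Perm.eq_inv_iff_eq, ← ha.nsmulL_add_eq_addLeft_pow]
    exact (ha.nsmulL_mem (n + 1)).add_neg_cancel_left t

theorem zsmulL_mem (ha : inMoufangCenter a) (j : ℤ) : inMoufangCenter (zsmulL j a) := by
  cases j with
  | ofNat n => exact ha.nsmulL_mem n
  | negSucc n => exact (ha.nsmulL_mem (n + 1)).neg_mem

theorem zsmulL_add_zsmulL_add (ha : inMoufangCenter a) (j k : ℤ) (t : Q) :
    zsmulL j a + (zsmulL k a + t) = zsmulL (j + k) a + t := by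
  simp only [ha.zsmulL_add_eq_addLeft_zpow, zpow_add, Equiv.Perm.mul_apply]

theorem zsmulL_add_zsmulL (ha : inMoufangCenter a) (j k : ℤ) :
    zsmulL j a + zsmulL k a = zsmulL (j + k) a := by
  simpa only [NKLoop.add_zero] using ha.zsmulL_add_zsmulL_add j k 0

theorem zsmulL_add_add_add_comm {v w : Q} (hv : inMoufangCenter v) (hw : inMoufangCenter w)
    (i j k l : ℤ) :
    (zsmulL i v + zsmulL j w) + (zsmulL k v + zsmulL l w) =
      (zsmulL i v + zsmulL k v) + (zsmulL j w + zsmulL l w) :=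
  calc (zsmulL i v + zsmulL j w) + (zsmulL k v + zsmulL l w)
      = (zsmulL i v + zsmulL j w) + (zsmulL i v + (zsmulL (k - i) v + zsmulL l w)) := by
        rw [hv.zsmulL_add_zsmulL_add, add_sub_cancel]
    _ = zsmulL (i + i) v + (zsmulL j w + (zsmulL (k - i) v + zsmulL l w)) := by
        rw [← hv.zsmulL_mem i _ _, hv.zsmulL_add_zsmulL]
    _ = zsmulL (i + i) v + (zsmulL (k - i) v + zsmulL (j + l) w) := by
        rw [(hv.zsmulL_mem _).add_comm (zsmulL l w), hw.zsmulL_add_zsmulL_add,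
          (hw.zsmulL_mem _).add_comm]
    _ = (zsmulL i v + zsmulL k v) + (zsmulL j w + zsmulL l w) := by
        rw [hv.zsmulL_add_zsmulL_add, hv.zsmulL_add_zsmulL, hw.zsmulL_add_zsmulL,
          show i + i + (k - i) = i + k by ring]

end inMoufangCenter

namespace inCenterOfK

variable {Q : Type u} [NKLoop Q] {z w p q : Q}

theorem add_add_add_comm (hz : inCenterOfK z) (hw : inCenterOfK w)
    (hp : inMoufangCenter p) (hq : inMoufangCenter q) :
    (p + z) + (q + w) = (p + q) + (z + w) :=
  calc (p + z) + (q + w) = p + ((z + q) + w) := by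
        rw [(hz.2 p _ hp (hq.add_mem hw.1)).2.1, (hz.2 q w hq hw.1).1]
    _ = p + ((q + z) + w) := by rw [hz.1.add_comm q]
    _ = (p + q) + (z + w) := by
        rw [← (hw.2 p _ hp (hq.add_mem hz.1)).2.2, ← (hz.2 p q hp hq).2.2,
          (hw.2 (p + q) z (hp.add_mem hq) hz.1).2.2]

theorem add (hz : inCenterOfK z) (hw : inCenterOfK w) : inCenterOfK (z + w) := by
  refine ⟨hz.1.add_mem hw.1, fun p q hp hq => ⟨?_, ?_, ?_⟩⟩
  · rw [(hz.2 w p hw.1 hp).1, (hz.2 (w + p) q (hw.1.add_mem hp) hq).1, (hw.2 p q hp hq).1,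
      ← (hz.2 w (p + q) hw.1 (hp.add_mem hq)).1]
  · rw [← (hw.2 p z hp hz.1).2.2, (hw.2 (p + z) q (hp.add_mem hz.1) hq).2.1,
      (hz.2 p (w + q) hp (hw.1.add_mem hq)).2.1, (hw.2 z q hz.1 hq).2.1]
  · rw [← (hw.2 (p + q) z (hp.add_mem hq) hz.1).2.2, (hz.2 p q hp hq).2.2,
      (hw.2 p (q + z) hp (hq.add_mem hz.1)).2.2, (hw.2 q z hq hz.1).2.2]

theorem add_add_add_comm_add {z₁ z₂ w₁ w₂ p₁ p₂ q₁ q₂ : Q}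
    (hz₁ : inCenterOfK z₁) (hz₂ : inCenterOfK z₂) (hw₁ : inCenterOfK w₁)
    (hw₂ : inCenterOfK w₂) (hp₁ : inMoufangCenter p₁) (hp₂ : inMoufangCenter p₂)
    (hq₁ : inMoufangCenter q₁) (hq₂ : inMoufangCenter q₂)
    (h : (p₁ + p₂) + (q₁ + q₂) = (p₁ + q₁) + (p₂ + q₂)) :
    ((p₁ + z₁) + (p₂ + z₂)) + ((q₁ + w₁) + (q₂ + w₂)) =
      ((p₁ + z₁) + (q₁ + w₁)) + ((p₂ + z₂) + (q₂ + w₂)) := by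
  rw [hz₁.add_add_add_comm hz₂ hp₁ hp₂, hw₁.add_add_add_comm hw₂ hq₁ hq₂,
    (hz₁.add hz₂).add_add_add_comm (hw₁.add hw₂) (hp₁.add_mem hp₂) (hq₁.add_mem hq₂),
    hz₁.add_add_add_comm hw₁ hp₁ hq₁, hz₂.add_add_add_comm hw₂ hp₂ hq₂,
    (hz₁.add hw₁).add_add_add_comm (hz₂.add hw₂) (hp₁.add_mem hq₁) (hp₂.add_mem hq₂), h,
    hz₂.add_add_add_comm hw₂ hz₁.1 hw₁.1]

end inCenterOfK

namespace inMoufangCenter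

variable {Q : Type u} [NKLoop Q]

theorem exists_inCenterOfK_eq_zsmulL_neg_add {v A : Q} (hv : inMoufangCenter v) {m : ℤ}
    (h : inCenterOfK (zsmulL m v + A)) :
    ∃ z, inCenterOfK z ∧ A = zsmulL (-m) v + z :=
  ⟨_, h, by rw [hv.zsmulL_add_zsmulL_add, neg_add_cancel, NKLoop.zsmulL_zero,
    NKLoop.zero_add]⟩

theorem quasicentral_add {x A B : Q} (hx : inMoufangCenter x) {m n : ℤ}
    (hA : inCenterOfK (zsmulL m x + A)) (hB : inCenterOfK (zsmulL n x + B)) :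
    inCenterOfK (zsmulL (m + n) x + (A + B)) := by
  obtain ⟨z, hz, rfl⟩ := hx.exists_inCenterOfK_eq_zsmulL_neg_add hA
  obtain ⟨w, hw, rfl⟩ := hx.exists_inCenterOfK_eq_zsmulL_neg_add hB
  rw [hz.add_add_add_comm hw (hx.zsmulL_mem _) (hx.zsmulL_mem _), hx.zsmulL_add_zsmulL,
    hx.zsmulL_add_zsmulL_add, show m + n + (-m + -n) = 0 by ring, NKLoop.zsmulL_zero,
    NKLoop.zero_add]
  exact hz.add hw

theorem add_add_add_comm_of_quasicentral {v w A B C D : Q} (hv : inMoufangCenter v)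
    (hw : inMoufangCenter w) {m n : ℤ}
    (hA : inCenterOfK (zsmulL m v + A)) (hB : inCenterOfK (zsmulL m w + B))
    (hC : inCenterOfK (zsmulL n v + C)) (hD : inCenterOfK (zsmulL n w + D)) :
    (A + B) + (C + D) = (A + C) + (B + D) := by
  obtain ⟨z₁, hz₁, rfl⟩ := hv.exists_inCenterOfK_eq_zsmulL_neg_add hA
  obtain ⟨z₂, hz₂, rfl⟩ := hw.exists_inCenterOfK_eq_zsmulL_neg_add hB
  obtain ⟨w₁, hw₁, rfl⟩ := hv.exists_inCenterOfK_eq_zsmulL_neg_add hC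
  obtain ⟨w₂, hw₂, rfl⟩ := hw.exists_inCenterOfK_eq_zsmulL_neg_add hD
  exact hz₁.add_add_add_comm_add hz₂ hw₁ hw₂ (hv.zsmulL_mem _) (hw.zsmulL_mem _)
    (hv.zsmulL_mem _) (hw.zsmulL_mem _) (zsmulL_add_add_add_comm hv hw _ _ _ _)

end inMoufangCenter

section Center

variable {Q : Type u}

theorem inNucleus.add [Add Q] {b c : Q} (hb : inNucleus b) (hc : inNucleus c) :
    inNucleus (b + c) := by
  intro x y
  refine ⟨?_, ?_, ?_⟩
  · rw [(hb c x).1, (hb (c + x) y).1, (hc x y).1, ← (hb c (x + y)).1]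
  · rw [← (hb x c).2.1, (hc (x + b) y).2.1, (hb x (c + y)).2.1, (hb c y).1]
  · rw [← (hc (x + y) b).2.2, (hb x y).2.2, (hc x (y + b)).2.2, (hc y b).2.2]

variable [NKLoop Q]

theorem inCenter.add {c d : Q} (hc : inCenter c) (hd : inCenter d) : inCenter (c + d) :=
  ⟨hc.1.add hd.1, hc.2.add_mem hd.2⟩

theorem inNucleus.add_add_add_comm {c d : Q} (hc : inNucleus c) (hd : inCenter d) (a b : Q) :
    (c + a) + (d + b) = (c + d) + (a + b) := by
  rw [(hc a (d + b)).1, ← (hd.1 a b).2.1, ← hd.2.add_comm a, (hd.1 a b).1, ← (hc d (a + b)).1]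

theorem inCenter.add_add_add_comm_add {c₁ c₂ d₁ d₂ a₁ a₂ b₁ b₂ : Q}
    (hc₁ : inCenter c₁) (hc₂ : inCenter c₂) (hd₁ : inCenter d₁) (hd₂ : inCenter d₂)
    (h : (a₁ + a₂) + (b₁ + b₂) = (a₁ + b₁) + (a₂ + b₂)) :
    ((c₁ + a₁) + (c₂ + a₂)) + ((d₁ + b₁) + (d₂ + b₂)) =
      ((c₁ + a₁) + (d₁ + b₁)) + ((c₂ + a₂) + (d₂ + b₂)) := by
  rw [hc₁.1.add_add_add_comm hc₂, hd₁.1.add_add_add_comm hd₂,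
    (hc₁.add hc₂).1.add_add_add_comm (hd₁.add hd₂), hc₁.1.add_add_add_comm hd₁ a₁ b₁,
    hc₂.1.add_add_add_comm hd₂ a₂ b₂, (hc₁.add hd₁).1.add_add_add_comm (hc₂.add hd₂), h,
    hc₁.1.add_add_add_comm hd₁ c₂ d₂]

end Center

theorem IsSpecial.isEndo_add {Q : Type u} [NKLoop Q] {f g : Q → Q} (hf : IsSpecial f)
    (hg : IsSpecial g) : IsEndo (fun x => f x + g x) := by
  obtain ⟨hfE, hfK, ⟨m, hfq⟩, hfN⟩ := hf
  obtain ⟨hgE, hgK, ⟨n, hgq⟩, hgN⟩ := hg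
  intro x y
  obtain ⟨u, v, hu, hv, rfl, -⟩ := NKLoop.nk_decomp x
  obtain ⟨u', v', hu', hv', rfl, -⟩ := NKLoop.nk_decomp y
  dsimp only
  rw [hfE, hfE u, hfE u', hgE, hgE u, hgE u']
  exact inCenter.add_add_add_comm_add ⟨hfN u hu, hfK u⟩ ⟨hfN u' hu', hfK u'⟩
    ⟨hgN u hu, hgK u⟩ ⟨hgN u' hu', hgK u'⟩
    (hv.add_add_add_comm_of_quasicentral hv' (hfq v hv) (hfq v' hv') (hgq v hv) (hgq v' hv'))

theorem special_add {Q : Type u} [NKLoop Q] (f g : Q → Q)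
    (hf : IsSpecial f) (hg : IsSpecial g) :
    IsSpecial (fun x : Q => f x + g x) ∧
    ((fun x : Q => f x + g x) = (fun x : Q => g x + f x)) := by
  have hadd := hf.isEndo_add hg
  obtain ⟨-, hfK, ⟨m, hfq⟩, hfN⟩ := hf
  obtain ⟨-, hgK, ⟨n, hgq⟩, hgN⟩ := hg
  refine ⟨⟨hadd, fun x => (hfK x).add_mem (hgK x),
    ⟨m + n, fun x hx => hx.quasicentral_add (hfq x hx) (hgq x hx)⟩,
    fun x hx => (hfN x hx).add (hgN x hx)⟩, funext fun x => (hfK x).add_comm (g x)⟩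
end

section
/- Let (Q,+) be an NK-loop and let f, g be endomorphisms of (Q,+) satisfying condition (F). Define h, k : Q → Q by h(x) = -x + f(x) and k(x) = -x + g(x) for all x ∈ Q. Then h∘k = k∘h if and only if f∘g = g∘f. -/
/- Preamble: NK-loops, written additively.
   A loop is a set with `+`, a neutral element `0`, and unique left/right
   solvability.  An NK-loop is a loop in which every element decomposes as
   `x = u + v = v + u` with `u` in the nucleus and `v` in the Moufang center.
   Every NK-loop is a diassociative Moufang loop, so every element has a
   (uniquely determined) two-sided inverse `-x`, which we include in the
   structure. -/

universe u

section AuxLemmas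
variable {Q : Type u} [NKLoop Q]

private lemma lcancel {a b c : Q} (hyp : a + b = a + c) : b = c := by
  obtain ⟨x, -, hu⟩ := NKLoop.exu_left a (a + c)
  exact (hu b hyp).trans (hu c rfl).symm

private lemma nuc1 {u : Q} (hu : inNucleus u) (x y : Q) :
    (u + x) + y = u + (x + y) := (hu x y).1

private lemma nuc2 {u : Q} (hu : inNucleus u) (x y : Q) :
    (x + u) + y = x + (u + y) := (hu x y).2.1

private lemma nuc3 {u : Q} (hu : inNucleus u) (x y : Q) :
    (x + y) + u = x + (y + u) := (hu x y).2.2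

private lemma lipN {u : Q} (hu : inNucleus u) (y : Q) : u + (-u + y) = y := by
  rw [← nuc1 hu, NKLoop.add_neg_cancel, NKLoop.zero_add]

private lemma lip'N {u : Q} (hu : inNucleus u) (y : Q) : -u + (u + y) = y := by
  apply lcancel (a := u)
  calc u + (-u + (u + y)) = (u + -u) + (u + y) := (nuc1 hu _ _).symm
    _ = u + y := by rw [NKLoop.add_neg_cancel, NKLoop.zero_add]

private lemma negMidN {u : Q} (hu : inNucleus u) (x y : Q) :
    (x + -u) + y = x + (-u + y) := by
  have e : (x + -u) + u = x := by
    rw [nuc3 hu, NKLoop.neg_add_cancel, NKLoop.add_zero]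
  calc (x + -u) + y = (x + -u) + (u + (-u + y)) := by rw [lipN hu]
    _ = ((x + -u) + u) + (-u + y) := (nuc2 hu _ _).symm
    _ = x + (-u + y) := by rw [e]

private lemma kSq {a : Q} (ha : inMoufangCenter a) (z : Q) :
    (a + a) + z = a + (a + z) := by
  have hz := ha 0 z
  rwa [NKLoop.zero_add z, NKLoop.add_zero a] at hz

private lemma kSq' {a : Q} (ha : inMoufangCenter a) (z : Q) :
    (a + a) + z = (a + z) + a := by
  have hz := ha z 0
  rwa [NKLoop.add_zero z, NKLoop.add_zero a] at hz

/-- Moufang-center elements commute with every element. -/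
private lemma kComm {a : Q} (ha : inMoufangCenter a) (z : Q) : a + z = z + a := by
  obtain ⟨y, hy, -⟩ := NKLoop.exu_left a z
  rw [← hy, ← kSq ha, kSq' ha]

private lemma lipK {a : Q} (ha : inMoufangCenter a) (y : Q) : a + (-a + y) = y := by
  apply lcancel (a := a)
  have h1 : (a + a) + (-a + y) = (a + -a) + (a + y) := ha (-a) y
  rw [NKLoop.add_neg_cancel, NKLoop.zero_add] at h1
  calc a + (a + (-a + y)) = (a + a) + (-a + y) := (kSq ha _).symm
    _ = a + y := h1

private lemma lip'K {a : Q} (ha : inMoufangCenter a) (y : Q) : -a + (a + y) = y :=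
  lcancel (a := a) (by rw [lipK ha])

private lemma negDecomp {a u v : Q} (hu : inNucleus u) (hv : inMoufangCenter v)
    (h1 : a = u + v) : -a = -v + -u := by
  have key : a + (-v + -u) = 0 := by
    rw [h1, nuc1 hu, lipK hv, NKLoop.add_neg_cancel]
  obtain ⟨z, -, huniq⟩ := NKLoop.exu_left a 0
  exact (huniq (-a) (NKLoop.add_neg_cancel a)).trans (huniq _ key).symm

/-- Left inverse property. -/
private lemma lip (a y : Q) : a + (-a + y) = y := by
  obtain ⟨u, v, hu, hv, h1, h2⟩ := NKLoop.nk_decomp a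
  rw [negDecomp hu hv h1, negMidN hu, h1, nuc1 hu, lipK hv, lipN hu]

/-- The other inverse property. -/
private lemma lip' (a y : Q) : -a + (a + y) = y := by
  obtain ⟨u, v, hu, hv, h1, h2⟩ := NKLoop.nk_decomp a
  have ha : a + y = u + (v + y) := by rw [h1, nuc1 hu]
  rw [negDecomp hu hv h1, negMidN hu, ha, lip'N hu, lip'K hv]

private lemma keyKI {x s n₁ n₂ : Q} (h1 : inNucleus n₁) (h2 : inNucleus n₂)
    (hcomm : (s + n₁) + (s + n₂) = (s + n₂) + (s + n₁)) (c : Q) :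
    (-x + n₁) + ((s + n₂) + c) = (-x + n₂) + ((s + n₁) + c) := by
  have E : (n₁ + s) + n₂ = (n₂ + s) + n₁ := by
    apply lcancel (a := s)
    calc s + ((n₁ + s) + n₂) = s + (n₁ + (s + n₂)) := by rw [nuc1 h1]
      _ = (s + n₁) + (s + n₂) := (nuc2 h1 _ _).symm
      _ = (s + n₂) + (s + n₁) := hcomm
      _ = s + (n₂ + (s + n₁)) := nuc2 h2 _ _
      _ = s + ((n₂ + s) + n₁) := by rw [nuc1 h2]
  calc (-x + n₁) + ((s + n₂) + c)
      = (-x + n₁) + (s + (n₂ + c)) := by rw [nuc2 h2 s c]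
    _ = -x + (n₁ + (s + (n₂ + c))) := nuc2 h1 _ _
    _ = -x + ((n₁ + s) + (n₂ + c)) := by rw [nuc1 h1]
    _ = -x + (((n₁ + s) + n₂) + c) := by rw [nuc2 h2 (n₁ + s) c]
    _ = -x + (((n₂ + s) + n₁) + c) := by rw [E]
    _ = -x + ((n₂ + s) + (n₁ + c)) := by rw [nuc2 h1 (n₂ + s) c]
    _ = -x + (n₂ + (s + (n₁ + c))) := by rw [← nuc1 h2]
    _ = (-x + n₂) + (s + (n₁ + c)) := (nuc2 h2 _ _).symm
    _ = (-x + n₂) + ((s + n₁) + c) := by rw [nuc2 h1 s c]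

end AuxLemmas

/- STATEMENT 11: Lemma 3.4.  Let `f, g` be endomorphisms of an NK-loop
   satisfying condition (F), and set `h(x) = -x + f(x)`, `k(x) = -x + g(x)`.
   Then `h ∘ k = k ∘ h` iff `f ∘ g = g ∘ f`. -/
theorem hk_commute_iff {Q : Type u} [NKLoop Q] (f g : Q → Q)
    (hf : IsEndo f) (hF : SatisfiesF f) (hg : IsEndo g) (hG : SatisfiesF g)
    (h k : Q → Q) (hh : ∀ x : Q, h x = -x + f x) (hk : ∀ x : Q, k x = -x + g x) :
    h ∘ k = k ∘ h ↔ f ∘ g = g ∘ f := by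
  have hFx : ∀ x : Q, f x = x + h x := fun x => by rw [hh x, lip]
  have hGx : ∀ x : Q, g x = x + k x := fun x => by rw [hk x, lip]
  -- the key identity
  have KI : ∀ x c : Q, (x + h x) + (k x + c) = (x + k x) + (h x + c) := by
    intro x c
    have hn₁ : inNucleus (x + f x) := (hF x).2
    have hn₂ : inNucleus (x + g x) := (hG x).2
    have e1 : x + h x = -x + (x + f x) := by
      rw [← hFx x]; exact (lip' x (f x)).symm
    have e2 : x + k x = -x + (x + g x) := by
      rw [← hGx x]; exact (lip' x (g x)).symm
    have e3 : h x = (-x + -x) + (x + f x) := by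
      have e : -x + f x = -x + (-x + (x + f x)) := by rw [lip']
      rw [hh x, e, ← nuc3 hn₁]
    have e4 : k x = (-x + -x) + (x + g x) := by
      have e : -x + g x = -x + (-x + (x + g x)) := by rw [lip']
      rw [hk x, e, ← nuc3 hn₂]
    have hKh : inMoufangCenter (h x) := by rw [hh x]; exact (hF x).1
    have hcomm : ((-x + -x) + (x + f x)) + ((-x + -x) + (x + g x))
        = ((-x + -x) + (x + g x)) + ((-x + -x) + (x + f x)) := by
      rw [← e3, ← e4]; exact kComm hKh (k x)
    rw [e1, e2, e3, e4]
    exact keyKI hn₁ hn₂ hcomm c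
  have expandF : ∀ x : Q, f (g x) = (x + h x) + (k x + h (k x)) := by
    intro x
    calc f (g x) = f (x + k x) := by rw [← hGx x]
      _ = f x + f (k x) := hf x (k x)
      _ = (x + h x) + (k x + h (k x)) := by rw [hFx x, hFx (k x)]
  have expandG : ∀ x : Q, g (f x) = (x + k x) + (h x + k (h x)) := by
    intro x
    calc g (f x) = g (x + h x) := by rw [← hFx x]
      _ = g x + g (h x) := hg x (h x)
      _ = (x + k x) + (h x + k (h x)) := by rw [hGx x, hGx (h x)]
  constructor
  · intro hhk
    funext x
    show f (g x) = g (f x)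
    calc f (g x) = (x + h x) + (k x + h (k x)) := expandF x
      _ = (x + h x) + (k x + k (h x)) := by rw [show h (k x) = k (h x) from congrFun hhk x]
      _ = (x + k x) + (h x + k (h x)) := KI x (k (h x))
      _ = g (f x) := (expandG x).symm
  · intro hfg
    funext x
    show h (k x) = k (h x)
    have E2 : (x + h x) + (k x + h (k x)) = (x + h x) + (k x + k (h x)) := by
      calc (x + h x) + (k x + h (k x)) = f (g x) := (expandF x).symm
        _ = g (f x) := congrFun hfg x
        _ = (x + k x) + (h x + k (h x)) := expandG x
        _ = (x + h x) + (k x + k (h x)) := (KI x (k (h x))).symm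
    exact lcancel (lcancel E2)
end
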